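/- arXiv:1302.2104 — 5 statements merged into one kernel-verified Lean document; each statement's English description precedes it below -/
import Mathlib

section
/- Let a > 0, b ≠ 0, d ∈ ℝ, and c > max(d, 0). The function φ(y) = (6(c-d)/b) · 1/(1 + cosh(√((c-d)/(ac)) · y)) is a C³ solution on ℝ of the ODE a c φ''' + b φ φ' + (d - c) φ' = 0. -/
open Real

/-! With `ψ(y) = 1 / (1 + cosh y) = sech²(y/2) / 2`, the KdV soliton of unit speed, one checks
`ψ''' + 6 ψ ψ' - ψ' = 0` by differentiating three times. The profile is `φ(y) = K ψ(k y)` with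
`K = 6(c - d)/b` and `k² = (c - d)/(a c)`; the scaling makes `a c k² = c - d` and `b K = 6(c - d)`,
which turns the BBM profile equation into `(c - d) K k` times the unit-speed one. -/

theorem iteratedDeriv_const_mul_comp_const_mul {𝕜 : Type*} [NontriviallyNormedField 𝕜]
    {n : ℕ} {f : 𝕜 → 𝕜} (hf : ContDiff 𝕜 n f) (K k y : 𝕜) :
    iteratedDeriv n (fun y => K * f (k * y)) y = K * k ^ n * iteratedDeriv n f (k * y) := by
  rw [iteratedDeriv_const_mul_field, iteratedDeriv_comp_const_mul hf, mul_assoc]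

theorem rescaled_solution_of_travelling_kdv {f : ℝ → ℝ} (hf : ContDiff ℝ 3 f)
    (hode : ∀ y, iteratedDeriv 3 f y + 6 * f y * deriv f y - deriv f y = 0)
    {α β γ K k : ℝ} (hα : α * k ^ 2 = -γ) (hβ : β * K = -6 * γ) (y : ℝ) :
    let g := fun y => K * f (k * y)
    α * iteratedDeriv 3 g y + β * g y * deriv g y + γ * deriv g y = 0 := by
  intro g
  have hg3 : iteratedDeriv 3 g y = K * k ^ 3 * iteratedDeriv 3 f (k * y) :=
    iteratedDeriv_const_mul_comp_const_mul hf K k y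
  have hg1 : deriv g y = K * k * deriv f (k * y) := by
    simpa only [iteratedDeriv_one, pow_one] using
      iteratedDeriv_const_mul_comp_const_mul (hf.of_le (by norm_num : (1 : WithTop ℕ∞) ≤ 3)) K k y
  rw [hg3, hg1]
  linear_combination (-K * k * γ) * hode (k * y) + (K * k * iteratedDeriv 3 f (k * y)) * hα
    + (K * k * f (k * y) * deriv f (k * y)) * hβ

noncomputable def unitSoliton (y : ℝ) : ℝ := (1 + cosh y)⁻¹

theorem one_add_cosh_pos (y : ℝ) : 0 < 1 + cosh y := by
  positivity

theorem contDiff_unitSoliton {n : WithTop ℕ∞} : ContDiff ℝ n unitSoliton :=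
  (contDiff_const.add contDiff_cosh).inv fun y => (one_add_cosh_pos y).ne'

theorem deriv_unitSoliton :
    deriv unitSoliton = fun y => -sinh y / (1 + cosh y) ^ 2 := by
  funext y
  exact (((hasDerivAt_cosh y).const_add 1).inv (one_add_cosh_pos y).ne').deriv

theorem deriv_deriv_unitSoliton :
    deriv (deriv unitSoliton) = fun y => (cosh y - 2) / (1 + cosh y) ^ 2 := by
  rw [deriv_unitSoliton]
  funext y
  have hD := (one_add_cosh_pos y).ne'
  have h := (hasDerivAt_sinh y).fun_neg.fun_div (((hasDerivAt_cosh y).const_add 1).fun_pow 2)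
    (pow_ne_zero 2 hD)
  rw [h.deriv]
  field_simp
  linear_combination (2 * cosh y + 2) * sinh_sq y

theorem iteratedDeriv_three_unitSoliton :
    iteratedDeriv 3 unitSoliton = fun y => sinh y * (5 - cosh y) / (1 + cosh y) ^ 3 := by
  rw [iteratedDeriv_succ, iteratedDeriv_succ, iteratedDeriv_one, deriv_deriv_unitSoliton]
  funext y
  have hD := (one_add_cosh_pos y).ne'
  have h := ((hasDerivAt_cosh y).sub_const 2).fun_div (((hasDerivAt_cosh y).const_add 1).fun_pow 2)
    (pow_ne_zero 2 hD)
  rw [h.deriv]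
  field_simp
  ring

theorem unitSoliton_travelling_kdv (y : ℝ) :
    iteratedDeriv 3 unitSoliton y + 6 * unitSoliton y * deriv unitSoliton y
      - deriv unitSoliton y = 0 := by
  rw [iteratedDeriv_three_unitSoliton, deriv_unitSoliton, unitSoliton]
  have := (one_add_cosh_pos y).ne'
  field_simp
  ring

theorem bbm_smooth_solitary_wave (a b c d : ℝ) (ha : 0 < a) (hb : b ≠ 0)
    (hcd : d < c) (hc : 0 < c) :
    let φ : ℝ → ℝ := fun y => (6 * (c - d) / b) * (1 / (1 + Real.cosh (Real.sqrt ((c - d) / (a * c)) * y)))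
    ContDiff ℝ 3 φ ∧
      ∀ y : ℝ, a * c * iteratedDeriv 3 φ y + b * φ y * deriv φ y + (d - c) * deriv φ y = 0 := by
  intro φ
  set k := √((c - d) / (a * c))
  have hk : a * c * k ^ 2 = -(d - c) := by
    rw [sq_sqrt (div_nonneg (sub_nonneg.2 hcd.le) (by positivity))]
    field_simp
    ring
  have hK : b * (6 * (c - d) / b) = -6 * (d - c) := by
    field_simp
    ring
  have hφ : φ = fun y => 6 * (c - d) / b * unitSoliton (k * y) := by
    funext y
    simp only [φ, unitSoliton, one_div, k]
  rw [hφ]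
  exact ⟨contDiff_const.mul (contDiff_unitSoliton.comp (contDiff_const.mul contDiff_id)),
    rescaled_solution_of_travelling_kdv contDiff_unitSoliton unitSoliton_travelling_kdv hk hK⟩
end

section
/- Let a > 0, b ≠ 0, d ∈ ℝ, and c > max(d, 0). The function φ(y) = (6(c-d)/b) · 1/(1 - cosh(√((c-d)/(ac)) · y)) is a solution of the ODE a c φ''' + b φ φ' + (d - c) φ' = 0 on ℝ \ {0}. -/
/-! The profile `ψ x = 1 / (1 - cosh x) = -csch² (x / 2) / 2` satisfies `ψ'' = ψ - 3 ψ²` away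
from `0`, hence `ψ''' = (1 - 6 ψ) ψ'`. For `φ y = A ψ (k y)` the BBM expression is then
`A k ψ' · (a c k² (1 - 6 ψ) + b A ψ + d - c)`, which vanishes identically in `ψ` exactly when
`a c k² = c - d` and `b A = 6 (c - d)`, which fix the width `k` and the amplitude `A`. -/

open Real Filter Topology

theorem iteratedDeriv_comp_mul_left {𝕜 F : Type*} [NontriviallyNormedField 𝕜]
    [NormedAddCommGroup F] [NormedSpace 𝕜 F] (n : ℕ) (f : 𝕜 → F) (c : 𝕜) :
    iteratedDeriv n (fun x => f (c * x)) = fun x => c ^ n • iteratedDeriv n f (c * x) := by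
  induction n with
  | zero => simp
  | succ n ih =>
    funext x
    rw [iteratedDeriv_succ, ih, iteratedDeriv_succ, deriv_fun_const_smul_field, deriv_comp_mul_left,
      pow_succ, mul_smul]

lemma one_sub_cosh_ne_zero {x : ℝ} (hx : x ≠ 0) : 1 - cosh x ≠ 0 :=
  (sub_neg.2 (one_lt_cosh.2 hx)).ne

noncomputable def invOneSubCosh (x : ℝ) : ℝ := 1 / (1 - cosh x)

lemma hasDerivAt_invOneSubCosh {x : ℝ} (hx : x ≠ 0) :
    HasDerivAt invOneSubCosh (sinh x * invOneSubCosh x ^ 2) x := by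
  have hne := one_sub_cosh_ne_zero hx
  unfold invOneSubCosh
  simp only [one_div]
  refine (((hasDerivAt_cosh x).const_sub 1).fun_inv hne).congr_deriv ?_
  field_simp

lemma deriv_invOneSubCosh_eventuallyEq {x : ℝ} (hx : x ≠ 0) :
    deriv invOneSubCosh =ᶠ[𝓝 x] fun t => sinh t * invOneSubCosh t ^ 2 := by
  filter_upwards [eventually_ne_nhds hx] with t ht
  exact (hasDerivAt_invOneSubCosh ht).deriv

lemma hasDerivAt_deriv_invOneSubCosh {x : ℝ} (hx : x ≠ 0) :
    HasDerivAt (deriv invOneSubCosh) (invOneSubCosh x - 3 * invOneSubCosh x ^ 2) x := by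
  have h := (hasDerivAt_sinh x).fun_mul ((hasDerivAt_invOneSubCosh hx).fun_pow 2)
  refine (h.congr_of_eventuallyEq (deriv_invOneSubCosh_eventuallyEq hx)).congr_deriv ?_
  have hne := one_sub_cosh_ne_zero hx
  simp only [invOneSubCosh, Nat.cast_ofNat, Nat.add_one_sub_one, pow_one]
  field_simp
  linear_combination 2 * sinh_sq x

lemma iteratedDeriv_three_invOneSubCosh {x : ℝ} (hx : x ≠ 0) :
    iteratedDeriv 3 invOneSubCosh x
      = deriv invOneSubCosh x - 6 * invOneSubCosh x * deriv invOneSubCosh x := by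
  have h2 : deriv (deriv invOneSubCosh) =ᶠ[𝓝 x]
      fun t => invOneSubCosh t - 3 * invOneSubCosh t ^ 2 := by
    filter_upwards [eventually_ne_nhds hx] with t ht
    exact (hasDerivAt_deriv_invOneSubCosh ht).deriv
  have hψ := (hasDerivAt_invOneSubCosh hx).differentiableAt.hasDerivAt
  rw [iteratedDeriv_succ, iteratedDeriv_succ, iteratedDeriv_one, h2.deriv_eq]
  exact (hψ.sub ((hψ.fun_pow 2).const_mul 3)).deriv.trans (by ring)

theorem bbm_singular_solitary_wave (a b c d : ℝ) (ha : 0 < a) (hb : b ≠ 0)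
    (hcd : d < c) (hc : 0 < c) :
    let φ : ℝ → ℝ := fun y => (6 * (c - d) / b) * (1 / (1 - Real.cosh (Real.sqrt ((c - d) / (a * c)) * y)))
    ∀ y : ℝ, y ≠ 0 →
      a * c * iteratedDeriv 3 φ y + b * φ y * deriv φ y + (d - c) * deriv φ y = 0 := by
  intro φ y hy
  set k := √((c - d) / (a * c))
  set A := 6 * (c - d) / b
  have hac : 0 < a * c := mul_pos ha hc
  have hk : 0 < k := sqrt_pos.2 (div_pos (sub_pos.2 hcd) hac)
  have hwidth : a * c * k ^ 2 = c - d := by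
    rw [sq_sqrt (div_nonneg (sub_pos.2 hcd).le hac.le)]
    field_simp
  have hamplitude : b * A = 6 * (c - d) := mul_div_cancel₀ _ hb
  have hφ : φ = fun y => A * invOneSubCosh (k * y) := rfl
  have hφ' : deriv φ y = A * k * deriv invOneSubCosh (k * y) := by
    rw [hφ, deriv_const_mul_field, deriv_comp_mul_left, smul_eq_mul, mul_assoc]
  have hφ''' : iteratedDeriv 3 φ y = A * k ^ 3 * iteratedDeriv 3 invOneSubCosh (k * y) := by
    simp only [hφ, iteratedDeriv_const_mul_field, iteratedDeriv_comp_mul_left, smul_eq_mul,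
      mul_assoc]
  rw [hφ', hφ''', iteratedDeriv_three_invOneSubCosh (mul_ne_zero hk.ne' hy), hφ]
  set ψ := invOneSubCosh (k * y)
  set ψ' := deriv invOneSubCosh (k * y)
  linear_combination (A * k * ψ' * (1 - 6 * ψ)) * hwidth + (A * k * ψ' * ψ) * hamplitude
end

section
/- Let a > 0, b ≠ 0, A ∈ ℝ, d ∈ ℝ, and c be such that c - d - Ab > 0 and c > 0. Then φ_A(y) = A + (6(c - d - Ab)/b) · 1/(1 + cosh(√((c - d - Ab)/(ac)) y)) is a C³ function on ℝ such that ψ := φ_A - A satisfies a c ψ''' + b ψ ψ' + (d + Ab - c) ψ' = 0 on ℝ, and φ_A(y) → A as y → ±∞. -/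
open Real Filter

private lemma upos (x : ℝ) : 0 < 1 + Real.cosh x := by
  have := Real.cosh_pos x; linarith

private lemma hd0 (x : ℝ) :
    HasDerivAt (fun x => 1 / (1 + Real.cosh x)) (-Real.sinh x / (1 + Real.cosh x) ^ 2) x := by
  have h : HasDerivAt (fun x => 1 + Real.cosh x) (Real.sinh x) x :=
    (Real.hasDerivAt_cosh x).const_add 1
  simpa [one_div, neg_div] using h.fun_inv (upos x).ne'

private lemma hd1 (x : ℝ) :
    HasDerivAt (fun x => -Real.sinh x / (1 + Real.cosh x) ^ 2)
      ((Real.cosh x - 2) / (1 + Real.cosh x) ^ 2) x := by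
  have hnum : HasDerivAt (fun x => -Real.sinh x) (-Real.cosh x) x := (Real.hasDerivAt_sinh x).neg
  have hu : HasDerivAt (fun x => 1 + Real.cosh x) (Real.sinh x) x :=
    (Real.hasDerivAt_cosh x).const_add 1
  have hden : HasDerivAt (fun x => (1 + Real.cosh x) ^ 2)
      (2 * (1 + Real.cosh x) * Real.sinh x) x := by
    simpa using hu.fun_pow 2
  have h := hnum.fun_div hden (by positivity)
  refine h.congr_deriv (Eq.symm ?_)
  have hs := Real.sinh_sq x
  have hne : (1 + Real.cosh x) ≠ 0 := (upos x).ne'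
  field_simp
  linear_combination (-2) * hs

private lemma hd2 (x : ℝ) :
    HasDerivAt (fun x => (Real.cosh x - 2) / (1 + Real.cosh x) ^ 2)
      (Real.sinh x * (5 - Real.cosh x) / (1 + Real.cosh x) ^ 3) x := by
  have hnum : HasDerivAt (fun x => Real.cosh x - 2) (Real.sinh x) x :=
    (Real.hasDerivAt_cosh x).sub_const 2
  have hu : HasDerivAt (fun x => 1 + Real.cosh x) (Real.sinh x) x :=
    (Real.hasDerivAt_cosh x).const_add 1
  have hden : HasDerivAt (fun x => (1 + Real.cosh x) ^ 2)
      (2 * (1 + Real.cosh x) * Real.sinh x) x := by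
    simpa using hu.fun_pow 2
  have h := hnum.fun_div hden (by positivity)
  refine h.congr_deriv (Eq.symm ?_)
  have hne : (1 + Real.cosh x) ≠ 0 := (upos x).ne'
  field_simp
  ring

private lemma cosh_tendsto_atTop : Tendsto Real.cosh atTop atTop := by
  apply tendsto_atTop_mono (fun x => ?_) (Real.tendsto_exp_atTop.atTop_div_const two_pos)
  rw [Real.cosh_eq]
  have := Real.exp_pos (-x)
  linarith

theorem bbm_solitary_wave_level_A (a b c d A : ℝ) (ha : 0 < a) (hb : b ≠ 0)
    (hc : 0 < c) (hshift : 0 < c - d - A * b) :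
    let φA : ℝ → ℝ := fun y =>
      A + (6 * (c - d - A * b) / b) * (1 / (1 + Real.cosh (Real.sqrt ((c - d - A * b) / (a * c)) * y)))
    let ψ : ℝ → ℝ := fun y => φA y - A
    ContDiff ℝ 3 φA ∧
      (∀ y, a * c * iteratedDeriv 3 ψ y + b * ψ y * deriv ψ y + (d + A * b - c) * deriv ψ y = 0) ∧
      Tendsto φA atTop (nhds A) ∧ Tendsto φA atBot (nhds A) := by
  intro φA ψ
  set κ := c - d - A * b with hκ
  set k := Real.sqrt (κ / (a * c)) with hk
  set C := 6 * κ / b with hC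
  have hac : 0 < a * c := mul_pos ha hc
  have hkpos : 0 < k := Real.sqrt_pos.mpr (div_pos hshift hac)
  have hk2 : k ^ 2 = κ / (a * c) := Real.sq_sqrt (le_of_lt (div_pos hshift hac))
  -- linear map derivative
  have hlin : ∀ y : ℝ, HasDerivAt (fun y : ℝ => k * y) k y := fun y => by
    simpa using (hasDerivAt_id y).const_mul k
  -- ψ as a clean function
  have hψeq : ψ = fun y => C * (1 / (1 + Real.cosh (k * y))) := by
    funext y; simp only [ψ, φA]; ring
  -- derivatives of ψ
  have hdψ : ∀ y, HasDerivAt ψ (C * (-Real.sinh (k * y) / (1 + Real.cosh (k * y)) ^ 2 * k)) y := by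
    intro y
    rw [hψeq]
    exact (((hd0 (k * y)).comp y (hlin y)).const_mul C)
  have hdψ1 : ∀ y, HasDerivAt (fun y => C * (-Real.sinh (k * y) / (1 + Real.cosh (k * y)) ^ 2 * k))
      (C * ((Real.cosh (k * y) - 2) / (1 + Real.cosh (k * y)) ^ 2 * k * k)) y := by
    intro y
    exact (((hd1 (k * y)).comp y (hlin y)).mul_const k).const_mul C
  have hdψ2 : ∀ y, HasDerivAt
      (fun y => C * ((Real.cosh (k * y) - 2) / (1 + Real.cosh (k * y)) ^ 2 * k * k))
      (C * (Real.sinh (k * y) * (5 - Real.cosh (k * y)) / (1 + Real.cosh (k * y)) ^ 3 * k * k * k)) y := by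
    intro y
    exact ((((hd2 (k * y)).comp y (hlin y)).mul_const k).mul_const k).const_mul C
  have hderiv1 : deriv ψ = fun y => C * (-Real.sinh (k * y) / (1 + Real.cosh (k * y)) ^ 2 * k) := by
    funext y; exact (hdψ y).deriv
  have hderiv2 : deriv (deriv ψ) =
      fun y => C * ((Real.cosh (k * y) - 2) / (1 + Real.cosh (k * y)) ^ 2 * k * k) := by
    rw [hderiv1]; funext y; exact (hdψ1 y).deriv
  have hderiv3 : deriv (deriv (deriv ψ)) =
      fun y => C * (Real.sinh (k * y) * (5 - Real.cosh (k * y)) / (1 + Real.cosh (k * y)) ^ 3 * k * k * k) := by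
    rw [hderiv2]; funext y; exact (hdψ2 y).deriv
  have hit3 : iteratedDeriv 3 ψ = deriv (deriv (deriv ψ)) := by
    rw [iteratedDeriv_succ, iteratedDeriv_succ, iteratedDeriv_one]
  refine ⟨?_, ?_, ?_, ?_⟩
  · -- ContDiff
    have hcd : ContDiff ℝ 3 (fun y : ℝ => 1 + Real.cosh (k * y)) :=
      contDiff_const.add (Real.contDiff_cosh.comp (contDiff_const.mul contDiff_id))
    have : ContDiff ℝ 3 φA := by
      exact contDiff_const.add (contDiff_const.mul
        (contDiff_const.div hcd (fun y => (upos (k * y)).ne')))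
    exact this
  · intro y
    rw [hit3, hderiv3, hderiv1]
    have hψy : ψ y = C * (1 / (1 + Real.cosh (k * y))) := by rw [hψeq]
    rw [hψy]
    set u := 1 + Real.cosh (k * y) with hu
    have hune : u ≠ 0 := (upos (k * y)).ne'
    have hbC : b * C = 6 * κ := by
      rw [hC]; field_simp
    have hack : a * c * (k * k) = κ := by
      have : k * k = κ / (a * c) := by rw [← pow_two]; exact hk2
      rw [this]; field_simp
    -- reduce to the core identity
    have hdAb : d + A * b - c = -κ := by rw [hκ]; ring
    rw [hdAb]
    have core : Real.sinh (k * y) * (5 - Real.cosh (k * y)) / u ^ 3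
        + 6 * (1 / u) * (-Real.sinh (k * y) / u ^ 2)
        - (-Real.sinh (k * y) / u ^ 2) = 0 := by
      have hcosh : Real.cosh (k * y) = u - 1 := by rw [hu]; ring
      rw [hcosh]
      field_simp
      ring
    -- now the full identity
    have expand : a * c * (C * (Real.sinh (k * y) * (5 - Real.cosh (k * y)) / u ^ 3 * k * k * k))
        + b * (C * (1 / u)) * (C * (-Real.sinh (k * y) / u ^ 2 * k))
        + -κ * (C * (-Real.sinh (k * y) / u ^ 2 * k))
        = κ * k * C * (Real.sinh (k * y) * (5 - Real.cosh (k * y)) / u ^ 3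
            + 6 * (1 / u) * (-Real.sinh (k * y) / u ^ 2)
            - (-Real.sinh (k * y) / u ^ 2)) := by
      linear_combination (C * (Real.sinh (k * y) * (5 - Real.cosh (k * y)) / u ^ 3) * k) * hack
        + (C * (1 / u) * (-Real.sinh (k * y) / u ^ 2) * k) * hbC
    rw [expand, core, mul_zero]
  · -- atTop
    have h1 : Tendsto (fun y : ℝ => k * y) atTop atTop :=
      Tendsto.const_mul_atTop hkpos tendsto_id
    have h2 : Tendsto (fun y : ℝ => 1 + Real.cosh (k * y)) atTop atTop :=
      (tendsto_atTop_add_const_left _ 1 (cosh_tendsto_atTop.comp h1))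
    have h3 : Tendsto (fun y : ℝ => 1 / (1 + Real.cosh (k * y))) atTop (nhds 0) := by
      simpa [one_div, Pi.inv_def] using h2.inv_tendsto_atTop
    have : Tendsto φA atTop (nhds (A + C * 0)) :=
      tendsto_const_nhds.add (tendsto_const_nhds.mul h3)
    simpa using this
  · -- atBot
    have h1 : Tendsto (fun y : ℝ => k * y) atBot atBot :=
      Tendsto.const_mul_atBot hkpos tendsto_id
    have h1' : Tendsto (fun y : ℝ => Real.cosh (k * y)) atBot atTop := by
      have hneg : Tendsto (fun y : ℝ => -(k * y)) atBot atTop := tendsto_neg_atBot_atTop.comp h1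
      have := cosh_tendsto_atTop.comp hneg
      simpa [Function.comp_def, Real.cosh_neg] using this
    have h2 : Tendsto (fun y : ℝ => 1 + Real.cosh (k * y)) atBot atTop :=
      (tendsto_atTop_add_const_left _ 1 h1')
    have h3 : Tendsto (fun y : ℝ => 1 / (1 + Real.cosh (k * y))) atBot (nhds 0) := by
      simpa [one_div, Pi.inv_def] using h2.inv_tendsto_atTop
    have : Tendsto φA atBot (nhds (A + C * 0)) :=
      tendsto_const_nhds.add (tendsto_const_nhds.mul h3)
    simpa using this
end

section
/- Consider a star with N ≥ 2 semi-infinite edges, coefficients aᵢ > 0, bᵢ ≠ 0 (with d_i = 0), where edges 1,…,L are incoming and edges L+1,…,N are outgoing (1 ≤ L < N). Suppose √(aᵢ/a₁) = bᵢ/b₁ > 0 for all i and Σ_{i=1}^{L} bᵢ = Σ_{j=L+1}^{N} bⱼ. Fix c₁ > 0 and set cᵢ = √(aᵢ/a₁) c₁. Then: (1) cᵢ > cᵢ·0 = 0 and cᵢ - 0 > 0 for all i; (2) the amplitude condition (c₁)/b₁ = cᵢ/bᵢ holds for all i; (3) the width condition c₁ √(c₁/(a₁c₁)) = cᵢ √(cᵢ/(aᵢcᵢ))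 holds for all i; and (4) the Kirchhoff condition Σ_{i=1}^{L} aᵢ/cᵢ = Σ_{j=L+1}^{N} aⱼ/cⱼ holds. -/
open Real Finset

/-
Writing sᵢ = √(aᵢ/a₁) = bᵢ/b₁, the speeds are cᵢ = sᵢc₁ and aᵢ = a₁sᵢ². Hence cᵢ/bᵢ = c₁/b₁,
the width factor cᵢ√(cᵢ/(aᵢcᵢ)) = cᵢ/√aᵢ = c₁/√a₁ does not depend on i, and the flux aᵢ/cᵢ = a₁sᵢ/c₁
is proportional to bᵢ, so Kirchhoff's condition is the hypothesis Σ_{i ≤ L} bᵢ = Σ_{j > L} bⱼ.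
-/

lemma mul_sqrt_div_mul_self (a c : ℝ) : c * √(c / (a * c)) = c / √a := by
  rcases eq_or_ne c 0 with rfl | hc
  · simp
  · rw [div_mul_cancel_right₀ hc, sqrt_inv, div_eq_mul_inv]

lemma sqrt_div_mul_div_sqrt {x : ℝ} (hx : 0 < x) (y c : ℝ) : √(x / y) * c / √x = c / √y := by
  have : √x ≠ 0 := (sqrt_pos.2 hx).ne'
  rw [sqrt_div hx.le]
  field_simp

lemma div_sqrt_div_mul (x y c : ℝ) : x / (√(x / y) * c) = y * √(x / y) / c := by
  rcases eq_or_ne √(x / y) 0 with hs | hs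
  · simp [hs]
  · have hxy : 0 < x / y := sqrt_ne_zero'.1 hs
    have hy : y ≠ 0 := by rintro rfl; simp at hxy
    have hx : x = y * √(x / y) ^ 2 := by rw [sq_sqrt hxy.le]; field_simp
    nth_rw 1 [hx]
    rcases eq_or_ne c 0 with rfl | hc
    · simp
    · field_simp

theorem bbm_star_travelling_wave_conditions_general (N L : ℕ) (hN : 2 ≤ N) (hLN : L < N)
    (a b : ℕ → ℝ) (ha : ∀ i ∈ Icc 1 N, 0 < a i) (hb : ∀ i ∈ Icc 1 N, b i ≠ 0)
    (hcomp : ∀ i ∈ Icc 1 N, Real.sqrt (a i / a 1) = b i / b 1 ∧ 0 < b i / b 1)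
    (hkirch : ∑ i ∈ Icc 1 L, b i = ∑ j ∈ Icc (L + 1) N, b j)
    (c₁ : ℝ) (hc₁ : 0 < c₁) (c : ℕ → ℝ) (hc : ∀ i ∈ Icc 1 N, c i = Real.sqrt (a i / a 1) * c₁) :
    (∀ i ∈ Icc 1 N, 0 < c i) ∧
    (∀ i ∈ Icc 1 N, c 1 / b 1 = c i / b i) ∧
    (∀ i ∈ Icc 1 N, c 1 * Real.sqrt (c 1 / (a 1 * c 1)) = c i * Real.sqrt (c i / (a i * c i))) ∧
    (∑ i ∈ Icc 1 L, a i / c i = ∑ j ∈ Icc (L + 1) N, a j / c j) := by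
  have h1 : 1 ∈ Icc 1 N := mem_Icc.2 ⟨le_rfl, by omega⟩
  have ha₁ := ha 1 h1
  have hc_one : c 1 = c₁ := by rw [hc 1 h1, div_self ha₁.ne', sqrt_one, one_mul]
  have hflux : ∀ i ∈ Icc 1 N, a i / c i = a 1 / (b 1 * c₁) * b i := by
    intro i hi
    rw [hc i hi, div_sqrt_div_mul, (hcomp i hi).1]
    ring
  refine ⟨fun i hi => ?_, fun i hi => ?_, fun i hi => ?_, ?_⟩
  · rw [hc i hi]
    exact mul_pos (sqrt_pos.2 (div_pos (ha i hi) ha₁)) hc₁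
  · rw [hc_one, hc i hi, (hcomp i hi).1]
    field_simp [hb i hi]
  · rw [mul_sqrt_div_mul_self, mul_sqrt_div_mul_self, hc_one, hc i hi,
      sqrt_div_mul_div_sqrt (ha i hi)]
  · rw [sum_congr rfl fun i hi => hflux i (Icc_subset_Icc_right hLN.le hi),
      sum_congr rfl fun j hj => hflux j (Icc_subset_Icc_left (by omega) hj),
      ← mul_sum, ← mul_sum, hkirch]

theorem bbm_star_travelling_wave_conditions (N L : ℕ) (hN : 2 ≤ N) (hL : 1 ≤ L) (hLN : L < N)
    (a b : ℕ → ℝ) (ha : ∀ i ∈ Icc 1 N, 0 < a i) (hb : ∀ i ∈ Icc 1 N, b i ≠ 0)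
    (hcomp : ∀ i ∈ Icc 1 N, Real.sqrt (a i / a 1) = b i / b 1 ∧ 0 < b i / b 1)
    (hkirch : ∑ i ∈ Icc 1 L, b i = ∑ j ∈ Icc (L + 1) N, b j)
    (c₁ : ℝ) (hc₁ : 0 < c₁) (c : ℕ → ℝ) (hc : ∀ i ∈ Icc 1 N, c i = Real.sqrt (a i / a 1) * c₁) :
    (∀ i ∈ Icc 1 N, 0 < c i) ∧
    (∀ i ∈ Icc 1 N, c 1 / b 1 = c i / b i) ∧
    (∀ i ∈ Icc 1 N, c 1 * Real.sqrt (c 1 / (a 1 * c 1)) = c i * Real.sqrt (c i / (a i * c i))) ∧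
    (∑ i ∈ Icc 1 L, a i / c i = ∑ j ∈ Icc (L + 1) N, a j / c j) :=
  bbm_star_travelling_wave_conditions_general N L hN hLN a b ha hb hcomp hkirch c₁ hc₁ c hc
end

section
/- Let n ≥ 1, let c₁, …, c_n > 0 and ℓ₁, …, ℓ_n > 0, and let φ₁, …, φ_n : ℝ → ℝ satisfy the gluing relations φ_{i+1}(z) = φᵢ(ℓᵢ + τᵢ - (cᵢ/c_{i+1})τ_{i+1} + (cᵢ/c_{i+1}) z) for all z ∈ ℝ and 1 ≤ i ≤ n-1, together with the closing relation φ₁(z) = φ_n(ℓ_n + τ_n - (c_n/c₁)τ₁ + (c_n/c₁) z) for all z ∈ ℝ (indices taken along a directed circuit). Then φ₁ is periodic with period P = Σ_{i=1}^{n} (c₁/cᵢ) ℓᵢ, i.e. φ₁(z) = φ₁(z + P) for all z ∈ ℝ. In particular, since P > 0, if φ₁ has a limit at +∞ and at -∞ and at most one local extremum (is solitary) and is nonconstant, a contradiction follows: any such travelling-wave profile on a directed circuit must be periodic, so no nonconstant solitary wave exists. -/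
/-!
Pass from the space variable `z` of the `i`-th edge to the time variable `s` through
`z = τᵢ + cᵢ s`. In these coordinates each gluing relation is a pure translation by the travel
time `ℓᵢ / cᵢ` of the edge, so going once around the circuit translates the first profile by
`T = ∑ ℓᵢ / cᵢ` and brings it back to itself: the profile is `T`-periodic in time, hence
`c₁ T`-periodic in space. A periodic function with a positive period and a limit at `+∞`
takes that limit everywhere.
-/

open Filter Finset Function Topology

theorem eq_add_sum_Ico_of_chain {α β : Type*} [AddCommMonoid α] {g : ℕ → α → β} {a : ℕ → α}
    {n : ℕ} (hstep : ∀ i, 1 ≤ i → i < n → ∀ s, g (i + 1) s = g i (s + a i)) :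
    ∀ k, 1 ≤ k → k ≤ n → ∀ s, g k s = g 1 (s + ∑ i ∈ Ico 1 k, a i) := by
  intro k hk
  induction k, hk using Nat.le_induction with
  | base => simp
  | succ k hk ih =>
    intro hkn s
    rw [hstep k hk hkn, ih (Nat.le_of_succ_le hkn), sum_Ico_succ_top hk, add_assoc, add_comm (a k)]

theorem periodic_of_closed_chain {α β : Type*} [AddCommMonoid α] {g : ℕ → α → β} {a : ℕ → α}
    {n : ℕ} (hn : 1 ≤ n) (hstep : ∀ i, 1 ≤ i → i < n → ∀ s, g (i + 1) s = g i (s + a i))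
    (hclose : ∀ s, g 1 s = g n (s + a n)) :
    Periodic (g 1) (∑ i ∈ Icc 1 n, a i) := by
  intro s
  rw [hclose s, eq_add_sum_Ico_of_chain hstep n hn le_rfl, ← Ico_add_one_right_eq_Icc,
    sum_Ico_succ_top hn, add_assoc, add_comm (a n)]

theorem comp_add_mul_eq_of_gluing {β : Type*} {ψ ψ' : ℝ → β} {c c' ℓ τ τ' : ℝ}
    (hc : c ≠ 0) (hc' : c' ≠ 0) (h : ∀ z, ψ' z = ψ (ℓ + τ - c / c' * τ' + c / c' * z)) (s : ℝ) :
    ψ' (τ' + c' * s) = ψ (τ + c * (s + ℓ / c)) := by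
  rw [h]
  congr 1
  field_simp
  ring

theorem Function.Periodic.of_comp_add_mul {β : Type*} {f : ℝ → β} {τ c T : ℝ} (hc : c ≠ 0)
    (h : Periodic (fun s => f (τ + c * s)) T) : Periodic f (c * T) := by
  intro z
  convert h ((z - τ) / c) using 2 <;> field_simp <;> ring

theorem Function.Periodic.eq_of_tendsto_atTop {β : Type*} [TopologicalSpace β] [T2Space β]
    {f : ℝ → β} {T : ℝ} {l : β} (h : Periodic f T) (hT : 0 < T)
    (hf : Tendsto f atTop (𝓝 l)) (x : ℝ) : f x = l := by
  have hshift : Tendsto (fun k : ℕ => x + k * T) atTop atTop :=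
    tendsto_atTop_add_const_left _ _ (tendsto_natCast_atTop_atTop.atTop_mul_const hT)
  refine tendsto_nhds_unique ?_ (hf.comp hshift)
  simp only [comp_def, h.nat_mul _ x, tendsto_const_nhds]

theorem directed_circuit_forces_periodicity (n : ℕ) (hn : 1 ≤ n)
    (c ℓ τ : ℕ → ℝ) (hc : ∀ i ∈ Icc 1 n, 0 < c i) (hℓ : ∀ i ∈ Icc 1 n, 0 < ℓ i)
    (φ : ℕ → ℝ → ℝ)
    (hglue : ∀ i, 1 ≤ i → i ≤ n - 1 → ∀ z : ℝ,
      φ (i + 1) z = φ i (ℓ i + τ i - (c i / c (i + 1)) * τ (i + 1) + (c i / c (i + 1)) * z))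
    (hclose : ∀ z : ℝ, φ 1 z = φ n (ℓ n + τ n - (c n / c 1) * τ 1 + (c n / c 1) * z)) :
    let P : ℝ := ∑ i ∈ Icc 1 n, (c 1 / c i) * ℓ i
    (∀ z : ℝ, φ 1 z = φ 1 (z + P)) ∧ 0 < P ∧
      (∀ l L : ℝ, Tendsto (φ 1) atTop (nhds l) → Tendsto (φ 1) atBot (nhds L) →
        ∀ z w : ℝ, φ 1 z = φ 1 w) := by
  intro P
  have hc0 : ∀ i, 1 ≤ i → i ≤ n → c i ≠ 0 := fun i h1 h2 => (hc i (mem_Icc.2 ⟨h1, h2⟩)).ne'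
  have hP_pos : 0 < P :=
    sum_pos (fun i hi => mul_pos (div_pos (hc 1 (mem_Icc.2 ⟨le_rfl, hn⟩)) (hc i hi)) (hℓ i hi))
      (nonempty_Icc.2 hn)
  have hP : c 1 * ∑ i ∈ Icc 1 n, ℓ i / c i = P := by
    rw [mul_sum]
    exact sum_congr rfl fun i _ => by ring
  have hper : Periodic (φ 1) P := by
    rw [← hP]
    refine Periodic.of_comp_add_mul (hc0 1 le_rfl hn) (periodic_of_closed_chain
      (g := fun i s => φ i (τ i + c i * s)) hn (fun i h1 h2 s => ?_) fun s => ?_)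
    · exact comp_add_mul_eq_of_gluing (hc0 i h1 h2.le) (hc0 (i + 1) (by omega) h2)
        (hglue i h1 (by omega)) s
    · exact comp_add_mul_eq_of_gluing (hc0 n hn le_rfl) (hc0 1 le_rfl hn) hclose s
  refine ⟨fun z => (hper z).symm, hP_pos, fun l _ hl _ z w => ?_⟩
  rw [hper.eq_of_tendsto_atTop hP_pos hl z, hper.eq_of_tendsto_atTop hP_pos hl w]
end
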